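/- Let n m : ℕ with m ≥ 2, let μ be a 3CNF over X = Fin n ⊕ Fin m, and let t : Fin m → Bool be such that every clause of μ contains a literal (Sum.inr j, s) with t j = s. Consider assignments q = (v, v', y, w) with v, v' : Fin n → Bool, y : Fin m → Bool, w : Fin (m − 1) → Bool, indexed by the variable set Fin n ⊕ Fin n ⊕ Fin m ⊕ Fin (m − 1), and define Φ q = true iff: (i) every clause of μ contains a literal that is true under the valuation sending (Sum.inl i, true) to v i, (Sum.inl i, false) to v' i, and (Sum.inr j, s) to decide (y j = s); (ii) (a, w) satisfies the chain condition, where a j = decide (y j ≠ t j); and (iii) for every i : Fin n, w (m − 2) = true → v i = v' i. Let t' be the assignment with v and v' constantly false, y = t, and w constantly true. Then every defining set D for ({q | Φ q = true}, t') contains, for each i : Fin n, the index of vᵢ or the index of v'ᵢ; in particular every defining set for ({q | Φ q = true}, t') has size at least n. -/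
import Mathlib


/-- A literal over the variable set `X`. -/
abbrev Lit (X : Type*) := X × Bool

/-- A 3-clause over `X`: an ordered triple of literals. -/
abbrev Clause3 (X : Type*) := Lit X × Lit X × Lit X

/-- A literal `(p, s)` is true under `σ` iff `σ p = s`. -/
def litEval {X : Type*} (σ : X → Bool) (l : Lit X) : Bool := σ l.1 == l.2

/-- A clause is true under `σ` iff at least one of its three literals is true. -/
def clauseEval {X : Type*} (σ : X → Bool) (c : Clause3 X) : Bool :=
  litEval σ c.1 || litEval σ c.2.1 || litEval σ c.2.2

/-- `D` is a defining set for `(F, s)`: `s ∈ F` and `s` is the unique element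
of `F` agreeing with `s` at every element of `D`. -/
def IsDefiningSet {V R : Type*} (F : Set (V → R)) (s : V → R) (D : Finset V) : Prop :=
  s ∈ F ∧ ∀ f ∈ F, (∀ x ∈ D, f x = s x) → f = s

/-- The chain condition encoding the clause chain
`(a₁ ∨ a₂ ∨ w₁) ∧ (¬w₁ ∨ a₃ ∨ w₂) ∧ ⋯ ∧ (¬w_{m−2} ∨ a_m ∨ w_{m−1})`. -/
def ChainCond {m : ℕ} (hm : 2 ≤ m) (a : Fin m → Bool) (w : Fin (m - 1) → Bool) : Prop :=
  (a ⟨0, by omega⟩ || a ⟨1, by omega⟩ || w ⟨0, by omega⟩) = true ∧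
  ∀ i : Fin (m - 1), 1 ≤ (i : ℕ) →
    (!(w ⟨(i : ℕ) - 1, by have := i.isLt; omega⟩) ||
      a ⟨(i : ℕ) + 1, by have := i.isLt; omega⟩ || w i) = true

/-- The variable set of the constructed formula `φ(v, v', y, w)`:
the variables `vᵢ`, `v'ᵢ`, `yⱼ`, `wᵢ`. -/
abbrev V4 (n m : ℕ) := Fin n ⊕ (Fin n ⊕ (Fin m ⊕ Fin (m - 1)))

/-- The valuation of literals of `μ` induced by an assignment `q` of the
new variables: `(Sum.inl i, true) ↦ vᵢ`, `(Sum.inl i, false) ↦ v'ᵢ`,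
`(Sum.inr j, s) ↦ decide (yⱼ = s)`. -/
def litVal {n m : ℕ} (q : V4 n m → Bool) : Lit (Fin n ⊕ Fin m) → Bool
  | (Sum.inl i, true) => q (Sum.inl i)
  | (Sum.inl i, false) => q (Sum.inr (Sum.inl i))
  | (Sum.inr j, s) => decide (q (Sum.inr (Sum.inr (Sum.inl j))) = s)

/-- The semantic satisfaction relation `Φ` of the formula `φ(v, v', y, w)`
constructed in the proof of Theorem 2.4. -/
def Phi {n m : ℕ} (hm : 2 ≤ m) (μ : List (Clause3 (Fin n ⊕ Fin m)))
    (t : Fin m → Bool) (q : V4 n m → Bool) : Prop :=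
  (∀ c ∈ μ, (litVal q c.1 || litVal q c.2.1 || litVal q c.2.2) = true) ∧
  ChainCond hm (fun j => decide (q (Sum.inr (Sum.inr (Sum.inl j))) ≠ t j))
    (fun i => q (Sum.inr (Sum.inr (Sum.inr i)))) ∧
  (∀ i : Fin n,
    q (Sum.inr (Sum.inr (Sum.inr ⟨m - 2, by omega⟩))) = true →
      q (Sum.inl i) = q (Sum.inr (Sum.inl i)))

/-- The distinguished assignment `t'`: `v` and `v'` constantly false,
`y = t`, `w` constantly true. -/
def tPrime {n m : ℕ} (t : Fin m → Bool) : V4 n m → Bool :=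
  Sum.elim (fun _ => false)
    (Sum.elim (fun _ => false) (Sum.elim t (fun _ => true)))

/-- The key counting step in the proof of Theorem 2.4: every defining set
for `(Φ, t')` contains, for each `i`, the index of `vᵢ` or of `v'ᵢ`;
in particular it has size at least `n`. -/
theorem stmt_11 (n m : ℕ) (hm : 2 ≤ m) (μ : List (Clause3 (Fin n ⊕ Fin m)))
    (t : Fin m → Bool)
    (ht : ∀ c ∈ μ, ∃ (j : Fin m) (s : Bool), t j = s ∧
      (c.1 = (Sum.inr j, s) ∨ c.2.1 = (Sum.inr j, s) ∨ c.2.2 = (Sum.inr j, s)))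
    (D : Finset (V4 n m))
    (hD : IsDefiningSet {q | Phi hm μ t q} (tPrime t) D) :
    (∀ i : Fin n, Sum.inl i ∈ D ∨ Sum.inr (Sum.inl i) ∈ D) ∧ n ≤ D.card := by
  have key : ∀ i : Fin n, Sum.inl i ∈ D ∨ Sum.inr (Sum.inl i) ∈ D := by
    intro i
    by_contra h
    push_neg at h
    obtain ⟨h1, h2⟩ := h
    set q : V4 n m → Bool := Sum.elim (fun j => decide (j = i))
      (Sum.elim (fun j => decide (j = i)) (Sum.elim t (fun _ => true))) with hq
    have hqPhi : Phi hm μ t q := by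
      refine ⟨?_, ⟨?_, ?_⟩, ?_⟩
      · intro c hc
        obtain ⟨j, s, hts, hlit⟩ := ht c hc
        have hval : litVal q (Sum.inr j, s) = true := by
          simp [litVal, hq, hts]
        rcases hlit with h | h | h <;> rw [h] <;> simp [hval]
      · simp [hq]
      · intro i' _
        simp [hq]
      · intro i' _
        simp [hq]
    have hagree : ∀ x ∈ D, q x = tPrime t x := by
      intro x hx
      match x with
      | Sum.inl j =>
        have hji : j ≠ i := by rintro rfl; exact h1 hx
        simp [hq, tPrime, hji]
      | Sum.inr (Sum.inl j) =>
        have hji : j ≠ i := by rintro rfl; exact h2 hx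
        simp [hq, tPrime, hji]
      | Sum.inr (Sum.inr x) => rfl
    have heq : q = tPrime t := hD.2 q hqPhi hagree
    have hfalse : q (Sum.inl i) = tPrime t (Sum.inl i) := by rw [heq]
    simp [hq, tPrime] at hfalse
  refine ⟨key, ?_⟩
  have hinj : Set.InjOn (fun i : Fin n =>
      if Sum.inl i ∈ D then (Sum.inl i : V4 n m) else Sum.inr (Sum.inl i))
      ↑(Finset.univ : Finset (Fin n)) := by
    intro a _ b _ hab
    dsimp only at hab
    split_ifs at hab <;>
      first
        | exact Sum.inl.inj hab
        | exact Sum.inl.inj (Sum.inr.inj hab)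
        | exact absurd hab (by simp)
  have hmap : ∀ a ∈ (Finset.univ : Finset (Fin n)),
      (if Sum.inl a ∈ D then (Sum.inl a : V4 n m) else Sum.inr (Sum.inl a)) ∈ D := by
    intro a _
    split_ifs with h
    · exact h
    · rcases key a with h' | h'
      · exact absurd h' h
      · exact h'
  have hle := Finset.card_le_card_of_injOn
      (fun i : Fin n => if Sum.inl i ∈ D then (Sum.inl i : V4 n m) else Sum.inr (Sum.inl i))
      hmap hinj
  simpa using hle
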